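/- Let n ≥ 3 and let {V_1, V_2} be a partition of {1,…,n} into two nonempty parts. Suppose D_1 is a family of 3-element subsets of V_1 such that every 2-element subset of V_1 is contained in some member of D_1, and D_2 is a family of 3-element subsets of V_2 such that every 2-element subset of V_2 is contained in some member of D_2. Then D_1 ∪ D_2 is a dominating set of the 3-token graph F_3(K_n). -/

import Mathlib

/-- The `k`-token graph of a simple graph `G`: vertices are the `k`-element
subsets of `V(G)`, and two subsets are adjacent when their symmetric difference
is a pair `{u, v}` of adjacent vertices of `G`. -/
def tokenGraph {V : Type*} [DecidableEq V] (G : SimpleGraph V) (k : ℕ) :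
    SimpleGraph {A : Finset V // A.card = k} where
  Adj A B := ∃ u v : V, G.Adj u v ∧ symmDiff A.1 B.1 = {u, v}
  symm := by
    refine ⟨?_⟩
    rintro A B ⟨u, v, huv, h⟩
    exact ⟨u, v, huv, by rwa [symmDiff_comm]⟩
  loopless := by
    refine ⟨?_⟩
    rintro A ⟨u, v, huv, h⟩
    rw [symmDiff_self] at h
    have : u ∈ (⊥ : Finset V) := h ▸ Finset.mem_insert_self u {v}
    simp at this

/-- A dominating set: every vertex is in `D` or adjacent to a vertex of `D`. -/
def IsDominatingSet {V : Type*} (G : SimpleGraph V) (D : Set V) : Prop :=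
  ∀ v : V, v ∈ D ∨ ∃ u ∈ D, G.Adj u v

/-- The domination number: minimum cardinality of a dominating set. -/
noncomputable def dominationNumber {V : Type*} [Fintype V] (G : SimpleGraph V) : ℕ :=
  sInf {m : ℕ | ∃ D : Finset V, IsDominatingSet G ↑D ∧ D.card = m}

/-- The star graph `S n` with vertex set `{0, 1, …, n}`, center `0` adjacent to
each leaf `1, …, n`. -/
def starGraph (n : ℕ) : SimpleGraph (Fin (n + 1)) where
  Adj u v := u ≠ v ∧ (u = 0 ∨ v = 0)
  symm := by refine ⟨?_⟩; rintro u v ⟨h1, h2⟩; exact ⟨h1.symm, h2.symm⟩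
  loopless := by refine ⟨?_⟩; rintro u ⟨h1, _⟩; exact h1 rfl

/-!
Since `V₁ ∪ V₂` is everything, a 3-set `B` meets one of the parts, say `Vᵢ`, in at least two
points. The pair design `Dᵢ` contains a block `A` through such a pair; then `A = B` or `A` and `B`
share exactly two points, i.e. they differ by moving one token, which is an edge of `F₃(Kₙ)`.
-/

open Finset

section TokenGraph

variable {V : Type*} [DecidableEq V] {k : ℕ}

theorem tokenGraph_top_adj_of_card_inter {A B : {A : Finset V // #A = k}} (hAB : A ≠ B)
    (hinter : k ≤ #(A.1 ∩ B.1) + 1) : (tokenGraph (⊤ : SimpleGraph V) k).Adj A B := by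
  have hsdiff_comm : #(A.1 \ B.1) = #(B.1 \ A.1) := card_sdiff_comm (A.2.trans B.2.symm)
  have hsdiff_le : #(A.1 \ B.1) ≤ 1 := by
    have := card_sdiff_add_card_inter A.1 B.1
    omega
  have hsdiff_ne : #(A.1 \ B.1) ≠ 0 := by
    intro h
    have hsub : A.1 ⊆ B.1 := sdiff_eq_empty_iff_subset.mp (card_eq_zero.mp h)
    exact hAB (Subtype.ext (eq_of_subset_of_card_le hsub (B.2.trans A.2.symm).le))
  obtain ⟨u, hu⟩ := card_eq_one.mp (show #(A.1 \ B.1) = 1 by omega)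
  obtain ⟨v, hv⟩ := card_eq_one.mp (show #(B.1 \ A.1) = 1 by omega)
  have huB : u ∉ B.1 := (mem_sdiff.mp (hu ▸ mem_singleton_self u)).2
  have hvB : v ∈ B.1 := (mem_sdiff.mp (hv ▸ mem_singleton_self v)).1
  refine ⟨u, v, fun huv => huB (huv ▸ hvB), ?_⟩
  rw [symmDiff_def, hu, hv]
  rfl

theorem mem_or_exists_adj_of_covers (W : Finset V) (D : Set {A : Finset V // #A = k})
    (hcov : ∀ e : Finset V, e ⊆ W → #e = k - 1 → ∃ A ∈ D, e ⊆ A.1)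
    (B : {A : Finset V // #A = k}) (hB : k - 1 ≤ #(B.1 ∩ W)) :
    B ∈ D ∨ ∃ A ∈ D, (tokenGraph (⊤ : SimpleGraph V) k).Adj A B := by
  obtain ⟨e, heBW, he⟩ := exists_subset_card_eq hB
  obtain ⟨A, hAD, heA⟩ := hcov e (heBW.trans inter_subset_right) he
  by_cases hAB : A = B
  · exact .inl (hAB ▸ hAD)
  · have hinter : #e ≤ #(A.1 ∩ B.1) :=
      card_le_card (subset_inter heA (heBW.trans inter_subset_left))
    exact .inr ⟨A, hAD, tokenGraph_top_adj_of_card_inter hAB (by omega)⟩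

end TokenGraph

theorem union_covering_designs_dominating_general (n : ℕ)
    (V1 V2 : Finset (Fin n)) (hunion : V1 ∪ V2 = Finset.univ)
    (D1 D2 : Set {A : Finset (Fin n) // A.card = 3})
    (hcov1 : ∀ e : Finset (Fin n), e ⊆ V1 → e.card = 2 → ∃ A ∈ D1, e ⊆ A.1)
    (hcov2 : ∀ e : Finset (Fin n), e ⊆ V2 → e.card = 2 → ∃ A ∈ D2, e ⊆ A.1) :
    IsDominatingSet (tokenGraph (⊤ : SimpleGraph (Fin n)) 3) (D1 ∪ D2) := by
  intro B
  have hsplit : #B.1 ≤ #(B.1 ∩ V1) + #(B.1 ∩ V2) := by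
    simpa only [← inter_union_distrib_left, hunion, inter_univ]
      using card_union_le (B.1 ∩ V1) (B.1 ∩ V2)
  rcases le_or_gt 2 #(B.1 ∩ V1) with hB1 | hB1
  · exact (mem_or_exists_adj_of_covers V1 D1 hcov1 B hB1).imp (Or.inl ·)
      fun ⟨A, hA, hadj⟩ => ⟨A, .inl hA, hadj⟩
  · have hB2 : 2 ≤ #(B.1 ∩ V2) := by rw [B.2] at hsplit; omega
    exact (mem_or_exists_adj_of_covers V2 D2 hcov2 B hB2).imp (Or.inr ·)
      fun ⟨A, hA, hadj⟩ => ⟨A, .inr hA, hadj⟩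

/-- If `{V₁, V₂}` is a partition of `{1, …, n}` into two nonempty parts, `D₁` is
a family of 3-subsets of `V₁` covering all 2-subsets of `V₁`, and `D₂` is a
family of 3-subsets of `V₂` covering all 2-subsets of `V₂`, then `D₁ ∪ D₂` is a
dominating set of `F₃(Kₙ)`. -/
theorem union_covering_designs_dominating (n : ℕ) (hn : 3 ≤ n)
    (V1 V2 : Finset (Fin n)) (hdisj : Disjoint V1 V2) (hunion : V1 ∪ V2 = Finset.univ)
    (h1 : V1.Nonempty) (h2 : V2.Nonempty)
    (D1 D2 : Set {A : Finset (Fin n) // A.card = 3})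
    (hD1 : ∀ A ∈ D1, A.1 ⊆ V1) (hD2 : ∀ A ∈ D2, A.1 ⊆ V2)
    (hcov1 : ∀ e : Finset (Fin n), e ⊆ V1 → e.card = 2 → ∃ A ∈ D1, e ⊆ A.1)
    (hcov2 : ∀ e : Finset (Fin n), e ⊆ V2 → e.card = 2 → ∃ A ∈ D2, e ⊆ A.1) :
    IsDominatingSet (tokenGraph (⊤ : SimpleGraph (Fin n)) 3) (D1 ∪ D2) :=
  union_covering_designs_dominating_general n V1 V2 hunion D1 D2 hcov1 hcov2
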